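/- For all natural numbers a > 1, d > 0, and n ≥ 0, and all states encoded as words x, y ∈ {0,…,d−1}^n: there is a transition x →(b/c) y in the n-fold composition of the division-by-d transducer in base a if and only if [x] →(b/c) [y] is a transition of the division-by-d^n transducer in base a, where [x_0…x_{n−1}] = Σ_k x_k·d^k is the reverse base-d encoding of the word x. -/

import Mathlib

/-!
Weighting the `k`-th digit equation `x_k a + b_k = b_{k+1} d + y_k` by `d ^ k` and summing
telescopes the intermediate carries away, leaving the single equation
`[x] a + b = c d ^ n + [y]`. Conversely, the equation determines the carries one at a time from
the least significant end: `y_0` must be `(x_0 a + b) % d` and `b_1 = (x_0 a + b) / d`, which is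
`< a` because `x_0 < d` and `b < a`; dividing off this column leaves the same equation for the
remaining words.
-/

/-- Transition of the `n`-fold composition of the division-by-`d` transducer in
base `a`: states are words over `{0,…,d-1}`; there is a transition
`x →(b/c) y` iff there are intermediate digits chaining the component
transitions `x_k * a + b_k = b_{k+1} * d + y_k`. -/
def CompTrans (a d : ℕ) : List ℕ → ℕ → ℕ → List ℕ → Prop
  | [], b, c, [] => b = c
  | x :: xs, b, c, y :: ys => ∃ e, e < a ∧ x * a + b = e * d + y ∧ CompTrans a d xs e c ys
  | _, _, _, _ => False

/-- Reverse base-`d` value (least significant digit first). -/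
def revVal (d : ℕ) : List ℕ → ℕ
  | [] => 0
  | c :: w => c + d * revVal d w

lemma Nat.div_add_eq_and_mod_eq {d L Z W y : ℕ} (hy : y < d) (h : L + d * Z = d * W + y) :
    L / d + Z = W ∧ L % d = y := by
  have hd : 0 < d := by omega
  obtain ⟨hdiv, hmod⟩ :=
    (Nat.div_mod_unique (a := L + d * Z) (d := W) (c := y) hd).mpr ⟨by rw [h]; ring, hy⟩
  rw [Nat.add_mul_div_left _ _ hd] at hdiv
  rw [Nat.add_mul_mod_self_left] at hmod
  exact ⟨hdiv, hmod⟩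

lemma Nat.mul_add_div_lt {a d x b : ℕ} (hx : x < d) (hb : b < a) : (x * a + b) / d < a :=
  (Nat.div_lt_iff_lt_mul (by omega)).mpr (by nlinarith)

theorem revVal_mul_add_of_compTrans {a d b c : ℕ} :
    ∀ {x y : List ℕ}, CompTrans a d x b c y →
      revVal d x * a + b = c * d ^ x.length + revVal d y
  | [], [], (h : b = c) => by simp [revVal, h]
  | x₀ :: xs, y₀ :: ys, ⟨e, _, hstep, htail⟩ => by
    have ih := revVal_mul_add_of_compTrans htail
    simp only [revVal, List.length_cons, pow_succ]
    linear_combination hstep + d * ih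

theorem compTrans_of_revVal_mul_add {a d c : ℕ} {x y : List ℕ} (hx : ∀ s ∈ x, s < d)
    (hy : ∀ s ∈ y, s < d) (hlen : x.length = y.length) {b : ℕ} (hb : b < a)
    (h : revVal d x * a + b = c * d ^ x.length + revVal d y) : CompTrans a d x b c y := by
  induction x generalizing y b with
  | nil =>
    obtain rfl : y = [] := List.length_eq_zero_iff.mp hlen.symm
    simpa [CompTrans, revVal] using h
  | cons x₀ xs ih =>
    obtain ⟨y₀, ys, rfl⟩ : ∃ y₀ ys, y = y₀ :: ys := List.exists_cons_of_length_eq_add_one hlen.symm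
    simp only [List.forall_mem_cons] at hx hy
    simp only [revVal, List.length_cons, pow_succ] at h
    obtain ⟨hcarry, hdigit⟩ := Nat.div_add_eq_and_mod_eq (L := x₀ * a + b)
      (Z := revVal d xs * a) (W := c * d ^ xs.length + revVal d ys) hy.1 (by linear_combination h)
    refine ⟨(x₀ * a + b) / d, Nat.mul_add_div_lt hx.1 hb, ?_, ?_⟩
    · conv_lhs => rw [← Nat.div_add_mod' (x₀ * a + b) d, hdigit]
    · exact ih hx.2 hy.2 (by simpa using hlen) (Nat.mul_add_div_lt hx.1 hb) (by omega)

theorem compTrans_iff_general (a d : ℕ)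
    (x y : List ℕ) (hx : ∀ s ∈ x, s < d) (hy : ∀ s ∈ y, s < d)
    (hlen : x.length = y.length) (b c : ℕ) (hb : b < a) :
    CompTrans a d x b c y ↔
      revVal d x * a + b = c * d ^ x.length + revVal d y :=
  ⟨revVal_mul_add_of_compTrans, compTrans_of_revVal_mul_add hx hy hlen hb⟩

theorem compTrans_iff (a d : ℕ) (ha : 1 < a) (hd : 0 < d)
    (x y : List ℕ) (hx : ∀ s ∈ x, s < d) (hy : ∀ s ∈ y, s < d)
    (hlen : x.length = y.length) (b c : ℕ) (hb : b < a) (hc : c < a) :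
    CompTrans a d x b c y ↔
      revVal d x * a + b = c * d ^ x.length + revVal d y :=
  compTrans_iff_general a d x y hx hy hlen b c hb
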